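/- arXiv:2006.16193 — 2 statements merged into one kernel-verified Lean document; each statement's English description precedes it below -/
import Mathlib

section
/- Let ν be a positive C¹ density on ℝ^d that has a (λ, h, B(x₀,R), C)-Lyapunov function of the specific form V(x) = γ‖x−x₀‖² + 1 with γ > 0. Then sup_{x∈B(x₀,R)} u_{B(x₀,R)}(x)/ν(x) ≤ a, where a = (C/V_d) · exp(λR²/4) · (4π/(λR²))^{d/2} and V_d is the volume of the d-dimensional unit ball. -/
open MeasureTheory RealInnerProductSpace

noncomputable section

abbrev Euc (d : ℕ) := EuclideanSpace ℝ (Fin d)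

def IsDensity {d : ℕ} (ρ : Euc d → ℝ) : Prop :=
  (∀ x, 0 ≤ ρ x) ∧ ∫ x, ρ x = 1

def lap {d : ℕ} (f : Euc d → ℝ) (x : Euc d) : ℝ :=
  ∑ i : Fin d, fderiv ℝ (fun y => fderiv ℝ f y (EuclideanSpace.single i 1)) x (EuclideanSpace.single i 1)

def LGen {d : ℕ} (ν V : Euc d → ℝ) (x : Euc d) : ℝ :=
  ⟪gradient V x, gradient (fun y => Real.log (ν y)) x⟫ + lap V x

structure IsLyapunov {d : ℕ} (ν V : Euc d → ℝ) (lam h : ℝ) (B : Set (Euc d)) (C : ℝ) : Prop where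
  contDiff : ContDiff ℝ 2 V
  one_le : ∀ x, 1 ≤ V x
  lam_pos : 0 < lam
  h_pos : 0 < h
  C_pos : 0 < C
  bounded : Bornology.IsBounded B
  drift : ∀ x, LGen ν V x ≤ -lam * V x + h * B.indicator 1 x
  ratio : ∀ x ∈ B, ∀ y ∈ B, ν x ≤ C * ν y

def uball {d : ℕ} (x₀ : Euc d) (R : ℝ) (x : Euc d) : ℝ :=
  (Metric.closedBall x₀ R).indicator (fun _ => ((volume (Metric.closedBall x₀ R)).toReal)⁻¹) x

def IsLyDensity {d : ℕ} (ν : Euc d → ℝ) (x₀ : Euc d) (R q a : ℝ) : Prop :=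
  ∃ V lam h C, IsLyapunov ν V lam h (Metric.closedBall x₀ R) C ∧
    (1 + h * R ^ 2 * C ^ 2) / lam ≤ q ∧
    ∀ x ∈ Metric.closedBall x₀ R, uball x₀ R x ≤ a * ν x

def Vball (d : ℕ) : ℝ := (volume (Metric.closedBall (0 : Euc d) 1)).toReal

def IsLogConcave {d : ℕ} (ν : Euc d → ℝ) (c L : ℝ) : Prop :=
  ContDiff ℝ 2 (fun x => -Real.log (ν x)) ∧
  (∀ x y : Euc d, c * ‖x - y‖ ^ 2 ≤
      ⟪gradient (fun z => -Real.log (ν z)) x - gradient (fun z => -Real.log (ν z)) y, x - y⟫) ∧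
  (∀ x : Euc d, ‖fderiv ℝ (fun z => gradient (fun w => -Real.log (ν w)) z) x‖ ≤ L)

def GammaR {d : ℕ} (π πy : Euc d → ℝ) (τ ρ : ℝ) (f : Euc d × Euc d → ℝ) (x y : Euc d) : ℝ :=
  ‖gradient (fun x' => f (x', y)) x‖ ^ 2 + τ * ‖gradient (fun y' => f (x, y')) y‖ ^ 2 +
    (ρ / 2) * min 1 (π y * πy x / (π x * πy y)) * (f (y, x) - f (x, y)) ^ 2


/-!
Outside the ball, the drift inequality for `V x = γ ‖x - x₀‖² + 1` bounds the radial derivative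
of `log ν` at distance `r` by `-λ r / 2`. Integrating along the ray from the exit point `z` of
the ball gives `ν y ≤ ν z · exp (λ (R² - ‖y - x₀‖²) / 4)`, and the ratio bound on the ball turns
this into the Gaussian domination `ν y ≤ C ν x · exp (λ R² / 4) · exp (-λ ‖y - x₀‖² / 4)` for
every `x` in the ball. Integrating in `y` gives `1 ≤ C ν x · exp (λ R² / 4) · (4π / λ) ^ (d / 2)`,
and `u_B = 1 / (R ^ d V_d)` on the ball.
-/

open Real Metric

section InnerProductSpace

variable {F : Type*} [NormedAddCommGroup F] [InnerProductSpace ℝ F]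

theorem hasFDerivAt_quadratic (γ : ℝ) (x₀ x : F) :
    HasFDerivAt (fun y => γ * ‖y - x₀‖ ^ 2 + 1) ((2 * γ) • innerSL ℝ (x - x₀)) x := by
  refine ((((hasFDerivAt_id x).sub_const x₀).norm_sq.const_mul γ).add_const 1).congr_fderiv ?_
  ext v
  simp only [id_eq, map_sub, ContinuousLinearMap.comp_id, smul_apply, sub_apply, coe_innerSL_apply,
    nsmul_eq_mul, Nat.cast_ofNat, smul_eq_mul]
  ring

theorem gradient_quadratic [CompleteSpace F] (γ : ℝ) (x₀ x : F) :
    gradient (fun y => γ * ‖y - x₀‖ ^ 2 + 1) x = (2 * γ) • (x - x₀) := by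
  rw [(hasFDerivAt_quadratic γ x₀ x).hasGradientAt.gradient,
    show (2 * γ) • innerSL ℝ (x - x₀) = InnerProductSpace.toDual ℝ F ((2 * γ) • (x - x₀)) by
      ext v; simp]
  exact LinearIsometryEquiv.symm_apply_apply _ _

end InnerProductSpace

theorem lap_quadratic {d : ℕ} (γ : ℝ) (x₀ x : Euc d) :
    lap (fun y => γ * ‖y - x₀‖ ^ 2 + 1) x = 2 * γ * d := by
  have hpartial (e : Euc d) :
      (fun y => fderiv ℝ (fun y => γ * ‖y - x₀‖ ^ 2 + 1) y e) =
        fun y => 2 * γ * (innerSL ℝ e y - innerSL ℝ e x₀) := by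
    funext y
    simp [(hasFDerivAt_quadratic γ x₀ y).fderiv, real_inner_comm]
  have hsecond (e : Euc d) :
      fderiv ℝ (fun y => fderiv ℝ (fun y => γ * ‖y - x₀‖ ^ 2 + 1) y e) x e = 2 * γ * ‖e‖ ^ 2 := by
    rw [hpartial, (((innerSL ℝ e).hasFDerivAt.sub_const _).const_mul (2 * γ)).fderiv]
    simp
  rw [lap, Finset.sum_congr rfl fun i _ => hsecond _]
  simp [PiLp.norm_single, mul_comm]

theorem LGen_quadratic {d : ℕ} (ν : Euc d → ℝ) (γ : ℝ) (x₀ x : Euc d) :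
    LGen ν (fun y => γ * ‖y - x₀‖ ^ 2 + 1) x =
      2 * γ * fderiv ℝ (fun y => log (ν y)) x (x - x₀) + 2 * γ * d := by
  rw [LGen, gradient_quadratic, lap_quadratic, real_inner_smul_left, real_inner_comm, gradient,
    InnerProductSpace.toDual_symm_apply]

theorem fderiv_log_apply_sub_le_of_LGen_le {d : ℕ} {ν : Euc d → ℝ} {γ lam : ℝ} {x₀ y : Euc d}
    (hγ : 0 < γ) (hlam : 0 ≤ lam)
    (hdrift : LGen ν (fun x => γ * ‖x - x₀‖ ^ 2 + 1) y ≤ -lam * (γ * ‖y - x₀‖ ^ 2 + 1)) :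
    fderiv ℝ (fun x => log (ν x)) y (y - x₀) ≤ -(lam / 2) * ‖y - x₀‖ ^ 2 := by
  rw [LGen_quadratic] at hdrift
  have : 2 * γ * (fderiv ℝ (fun x => log (ν x)) y (y - x₀) + lam / 2 * ‖y - x₀‖ ^ 2) ≤ 0 := by
    nlinarith
  linarith [nonpos_of_mul_nonpos_right this (by positivity)]

section NormedSpace

variable {E : Type*} [NormedAddCommGroup E] [NormedSpace ℝ E]

theorem le_of_radial_fderiv_le {g : E → ℝ} (hg : Differentiable ℝ g) {x₀ y : E} {R c : ℝ}
    (hR : 0 < R) (hderiv : ∀ z, R < ‖z - x₀‖ → fderiv ℝ g z (z - x₀) ≤ -c * ‖z - x₀‖ ^ 2)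
    (hy : R < ‖y - x₀‖) :
    g y ≤ g (x₀ + (R / ‖y - x₀‖) • (y - x₀)) + c / 2 * (R ^ 2 - ‖y - x₀‖ ^ 2) := by
  set v := y - x₀
  set r := ‖v‖
  have hr : 0 < r := hR.trans hy
  set φ : ℝ → ℝ := fun s => g (x₀ + s • v) + c / 2 * (s * r) ^ 2
  have hφ (s : ℝ) : HasDerivAt φ (fderiv ℝ g (x₀ + s • v) v + c * s * r ^ 2) s := by
    have hline : HasDerivAt (fun s : ℝ => x₀ + s • v) v s := by
      simpa using ((hasDerivAt_id s).smul_const v).const_add x₀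
    refine (((hg _).hasFDerivAt.comp_hasDerivAt s hline).add
      ((((hasDerivAt_id s).mul_const r).pow 2).const_mul (c / 2))).congr_deriv ?_
    simp only [Nat.cast_ofNat, id_eq, Nat.add_one_sub_one, pow_one, one_mul, add_right_inj]
    ring
  have hφ' (s : ℝ) (hs : s ∈ interior (Set.Icc (R / r) 1)) :
      fderiv ℝ g (x₀ + s • v) v + c * s * r ^ 2 ≤ 0 := by
    rw [interior_Icc] at hs
    have hs0 : 0 < s := (div_pos hR hr).trans hs.1
    have hnorm : ‖x₀ + s • v - x₀‖ = s * r := by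
      rw [add_sub_cancel_left, norm_smul, Real.norm_of_nonneg hs0.le]
    have hout : R < ‖x₀ + s • v - x₀‖ := by
      rw [hnorm]; exact (div_lt_iff₀ hr).mp hs.1
    have h := hderiv _ hout
    rw [hnorm, add_sub_cancel_left, map_smul, smul_eq_mul] at h
    nlinarith
  have hanti : AntitoneOn φ (Set.Icc (R / r) 1) :=
    antitoneOn_of_hasDerivWithinAt_nonpos (convex_Icc _ _)
      (fun s _ => (hφ s).continuousAt.continuousWithinAt)
      (fun s _ => (hφ s).hasDerivWithinAt) hφ'
  have hRr : R / r ≤ 1 := (div_le_one hr).mpr hy.le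
  have := hanti ⟨le_rfl, hRr⟩ ⟨hRr, le_rfl⟩ hRr
  simp only [φ, one_smul, one_mul, div_mul_cancel₀ R hr.ne', v, add_sub_cancel] at this
  linarith

theorem le_mul_exp_neg_sq_of_fderiv_log_le {ν : E → ℝ} (hνpos : ∀ y, 0 < ν y)
    (hlog : Differentiable ℝ fun y => log (ν y)) {x₀ : E} {R lam K : ℝ} (hR : 0 < R) (hlam : 0 ≤ lam)
    (hball : ∀ y ∈ closedBall x₀ R, ν y ≤ K)
    (hderiv : ∀ y, R < ‖y - x₀‖ →
      fderiv ℝ (fun y => log (ν y)) y (y - x₀) ≤ -(lam / 2) * ‖y - x₀‖ ^ 2)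
    (y : E) :
    ν y ≤ K * exp (lam * R ^ 2 / 4) * exp (-(lam / 4) * ‖y - x₀‖ ^ 2) := by
  rw [mul_assoc, ← exp_add]
  rcases le_or_gt ‖y - x₀‖ R with hy | hy
  · have hexp : 1 ≤ exp (lam * R ^ 2 / 4 + -(lam / 4) * ‖y - x₀‖ ^ 2) := by
      apply one_le_exp
      nlinarith [pow_le_pow_left₀ (norm_nonneg _) hy 2]
    have hK := hball y (mem_closedBall_iff_norm.mpr hy)
    nlinarith [hνpos y]
  · set z := x₀ + (R / ‖y - x₀‖) • (y - x₀)
    have hz : z ∈ closedBall x₀ R := by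
      rw [mem_closedBall_iff_norm, add_sub_cancel_left, norm_smul,
        Real.norm_of_nonneg (by positivity), div_mul_cancel₀ R (hR.trans hy).ne']
    have hlogy := le_of_radial_fderiv_le hlog hR hderiv hy
    calc ν y = exp (log (ν y)) := (exp_log (hνpos y)).symm
      _ ≤ exp (log (ν z) + lam / 2 / 2 * (R ^ 2 - ‖y - x₀‖ ^ 2)) := exp_le_exp.mpr hlogy
      _ = ν z * exp (lam * R ^ 2 / 4 + -(lam / 4) * ‖y - x₀‖ ^ 2) := by
        rw [exp_add, exp_log (hνpos z)]; ring_nf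
      _ ≤ K * exp (lam * R ^ 2 / 4 + -(lam / 4) * ‖y - x₀‖ ^ 2) := by
        gcongr; exact hball z hz

end NormedSpace

section FiniteDimensional

variable {V : Type*} [NormedAddCommGroup V] [InnerProductSpace ℝ V] [FiniteDimensional ℝ V]
  [MeasurableSpace V] [BorelSpace V]

theorem one_le_mul_rpow_of_le_gaussian {ν : V → ℝ} (hν : ∫ y, ν y = 1) {x₀ : V} {b K : ℝ}
    (hb : 0 < b) (hle : ∀ y, ν y ≤ K * exp (-b * ‖y - x₀‖ ^ 2)) :
    1 ≤ K * (π / b) ^ (Module.finrank ℝ V / 2 : ℝ) := by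
  have hgauss : ∫ y, exp (-b * ‖y - x₀‖ ^ 2) = (π / b) ^ (Module.finrank ℝ V / 2 : ℝ) := by
    rw [integral_sub_right_eq_self (fun y => exp (-b * ‖y‖ ^ 2)) x₀,
      GaussianFourier.integral_rexp_neg_mul_sq_norm hb]
  have hgauss_int : Integrable fun y : V => exp (-b * ‖y - x₀‖ ^ 2) :=
    Integrable.of_integral_ne_zero (by rw [hgauss]; positivity)
  have hν_int : Integrable ν := Integrable.of_integral_ne_zero (by rw [hν]; exact one_ne_zero)
  calc 1 = ∫ y, ν y := hν.symm
    _ ≤ ∫ y, K * exp (-b * ‖y - x₀‖ ^ 2) := integral_mono hν_int (hgauss_int.const_mul K) hle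
    _ = K * (π / b) ^ (Module.finrank ℝ V / 2 : ℝ) := by rw [integral_const_mul, hgauss]

end FiniteDimensional

theorem Vball_pos (d : ℕ) : 0 < Vball d :=
  ENNReal.toReal_pos (measure_closedBall_pos volume 0 one_pos).ne' measure_closedBall_lt_top.ne

theorem uball_of_mem {d : ℕ} {x₀ x : Euc d} {R : ℝ} (hR : 0 ≤ R) (hx : x ∈ closedBall x₀ R) :
    uball x₀ R x = (R ^ d * Vball d)⁻¹ := by
  rw [uball, Set.indicator_of_mem hx, ← measureReal_def, Measure.addHaar_real_closedBall' _ _ hR,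
    finrank_euclideanSpace_fin, Vball, measureReal_def]

theorem div_sq_rpow_div_two {a R : ℝ} (ha : 0 ≤ a) (hR : 0 ≤ R) (d : ℕ) :
    (a / R ^ 2) ^ ((d : ℝ) / 2) = a ^ ((d : ℝ) / 2) / R ^ d := by
  rw [div_rpow ha (by positivity), ← rpow_natCast R 2, ← rpow_mul hR, ← rpow_natCast R d]
  congr 2
  push_cast
  ring

theorem quadratic_lyapunov_uniform_bound_general
    (d : ℕ) (ν : Euc d → ℝ)
    (hν : IsDensity ν) (hνpos : ∀ x, 0 < ν x) (hνC1 : ContDiff ℝ 1 ν)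
    (x₀ : Euc d) (γ lam h C R : ℝ) (hγ : 0 < γ) (hR : 0 < R)
    (hLy : IsLyapunov ν (fun x => γ * ‖x - x₀‖ ^ 2 + 1) lam h (Metric.closedBall x₀ R) C) :
    ∀ x ∈ Metric.closedBall x₀ R,
      uball x₀ R x
        ≤ ((C / Vball d) * Real.exp (lam * R ^ 2 / 4) *
            (4 * Real.pi / (lam * R ^ 2)) ^ ((d : ℝ) / 2)) * ν x := by
  intro x hx
  have hlam := hLy.lam_pos
  have hlog : Differentiable ℝ fun y => log (ν y) :=
    (hνC1.log fun y => (hνpos y).ne').differentiable one_ne_zero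
  have hderiv (y : Euc d) (hy : R < ‖y - x₀‖) :
      fderiv ℝ (fun y => log (ν y)) y (y - x₀) ≤ -(lam / 2) * ‖y - x₀‖ ^ 2 := by
    refine fderiv_log_apply_sub_le_of_LGen_le hγ hlam.le ?_
    have hout : y ∉ closedBall x₀ R := by rwa [mem_closedBall_iff_norm, not_le]
    simpa [Set.indicator_of_notMem hout] using hLy.drift y
  have hdom := le_mul_exp_neg_sq_of_fderiv_log_le hνpos hlog hR hlam.le
    (fun y hy => hLy.ratio y hy x hx) hderiv
  have hmass := one_le_mul_rpow_of_le_gaussian hν.2 (b := lam / 4) (by positivity) hdom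
  rw [finrank_euclideanSpace_fin, div_div_eq_mul_div] at hmass
  rw [uball_of_mem hR.le hx, show 4 * π / (lam * R ^ 2) = π * 4 / lam / R ^ 2 by ring,
    div_sq_rpow_div_two (by positivity) hR.le]
  have hV := Vball_pos d
  calc (R ^ d * Vball d)⁻¹ = 1 / (R ^ d * Vball d) := inv_eq_one_div _
    _ ≤ C * ν x * exp (lam * R ^ 2 / 4) * (π * 4 / lam) ^ ((d : ℝ) / 2) / (R ^ d * Vball d) := by
      gcongr
    _ = _ := by field_simp

/-- if a density has a quadratic Lyapunov function `V(x) = γ‖x−x₀‖² + 1`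
on the ball `B(x₀,R)`, then the uniform density on the ball is dominated by
`a·ν` with `a = (C/V_d)·exp(λR²/4)·(4π/(λR²))^{d/2}`. -/
theorem quadratic_lyapunov_uniform_bound
    (d : ℕ) (hd : 1 ≤ d) (ν : Euc d → ℝ)
    (hν : IsDensity ν) (hνpos : ∀ x, 0 < ν x) (hνC1 : ContDiff ℝ 1 ν)
    (x₀ : Euc d) (γ lam h C R : ℝ) (hγ : 0 < γ) (hR : 0 < R)
    (hLy : IsLyapunov ν (fun x => γ * ‖x - x₀‖ ^ 2 + 1) lam h (Metric.closedBall x₀ R) C) :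
    ∀ x ∈ Metric.closedBall x₀ R,
      uball x₀ R x
        ≤ ((C / Vball d) * Real.exp (lam * R ^ 2 / 4) *
            (4 * Real.pi / (lam * R ^ 2)) ^ ((d : ℝ) / 2)) * ν x :=
  quadratic_lyapunov_uniform_bound_general d ν hν hνpos hνC1 x₀ γ lam h C R hγ hR hLy
end
end

section
/- Lyapunov function for tempered log-concave densities: let ν be an (l^{−2}, l^{−2}𝒞)-log-concave density on ℝ^d with mode m, let β ∈ (0,1], let μ be the density proportional to ν^β, and set λ_β = β l^{−2} and R_β = √(4d/λ_β). Then V(x) = (λ_β/(2d))‖x−m‖² + 1 is a (λ_β, 2λ_β, B(m, R_β), exp(2d𝒞))-Lyapunov function for μ; in particular L_μ V(x) ≤ −λ_β V(x) + 2λ_β·1_{‖x−m‖² ≤ 4d/λ_β}(x) for all x, and sup_{x∈B(m,R_β)} μ(x) / inf_{x∈B(m,R_β)} μ(x) ≤ exp(2d𝒞). -/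
open MeasureTheory RealInnerProductSpace

noncomputable section

/-! With `H = -log ν` we have `∇ log μ = -β ∇H`, and strong convexity at the mode gives
`⟪∇H x, x - m⟫ ≥ l⁻² ‖x - m‖²`. Hence `L_μ V ≤ -2λ_β (V - 1) + λ_β`, which is at most `-λ_β V`
once `V ≥ 3`, i.e. outside `B(m, R_β)`. On that ball `H` lies between `H m` (convexity) and
`H m + l⁻²𝒞 R_β² / 2` (Lipschitz gradient), so `μ ∝ ν^β` oscillates by at most
`exp (β l⁻²𝒞 R_β² / 2) = exp (2d𝒞)`. -/

open InnerProductSpace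

section Calculus

variable {E : Type*} [NormedAddCommGroup E] [InnerProductSpace ℝ E] [CompleteSpace E]

theorem hasGradientAt_mul_norm_sub_sq_add (a b : ℝ) (m x : E) :
    HasGradientAt (fun x => a * ‖x - m‖ ^ 2 + b) ((2 * a) • (x - m)) x := by
  rw [hasGradientAt_iff_hasFDerivAt]
  refine ((((hasFDerivAt_id x).sub_const m).norm_sq).const_mul a).add_const b |>.congr_fderiv ?_
  ext y
  simp [mul_assoc, mul_left_comm a 2]

theorem hasDerivAt_comp_add_smul {H : E → ℝ} (hH : Differentiable ℝ H) (m u : E) (t : ℝ) :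
    HasDerivAt (fun t : ℝ => H (m + t • u)) ⟪gradient H (m + t • u), u⟫ t := by
  have hline : HasDerivAt (fun t : ℝ => m + t • u) u t := by
    simpa using ((hasDerivAt_id t).smul_const u).const_add m
  exact ((hH _).hasGradientAt.hasFDerivAt.comp_hasDerivAt t hline).congr_deriv
    (toDual_apply_apply ..)

theorem le_of_forall_inner_gradient_sub_nonneg {H : E → ℝ} (hH : Differentiable ℝ H) {m : E}
    (hmono : ∀ z, 0 ≤ ⟪gradient H z, z - m⟫) (x : E) : H m ≤ H x := by
  have hg := hasDerivAt_comp_add_smul hH m (x - m)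
  have hmon : MonotoneOn (fun t : ℝ => H (m + t • (x - m))) (Set.Icc 0 1) := by
    refine monotoneOn_of_hasDerivWithinAt_nonneg (convex_Icc 0 1)
      (fun t _ => (hg t).continuousAt.continuousWithinAt) (fun t _ => (hg t).hasDerivWithinAt)
      fun t ht => ?_
    rw [interior_Icc] at ht
    have h := hmono (m + t • (x - m))
    rw [add_sub_cancel_left, real_inner_smul_right] at h
    exact nonneg_of_mul_nonneg_right (by linarith) ht.1
  simpa using hmon (by simp) (by simp) zero_le_one

theorem le_add_mul_norm_sub_sq_of_lipschitz_gradient {H : E → ℝ} (hH : Differentiable ℝ H)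
    {L : ℝ} (hLip : ∀ x y, ‖gradient H x - gradient H y‖ ≤ L * ‖x - y‖) {m : E}
    (hm : gradient H m = 0) (x : E) : H x ≤ H m + L / 2 * ‖x - m‖ ^ 2 := by
  set u := x - m
  have hg := hasDerivAt_comp_add_smul hH m u
  have hB (t : ℝ) :
      HasDerivAt (fun t : ℝ => H m + L / 2 * ‖u‖ ^ 2 * t ^ 2) (L * ‖u‖ ^ 2 * t) t :=
    (((hasDerivAt_pow 2 t).const_mul (L / 2 * ‖u‖ ^ 2)).const_add (H m)).congr_deriv
      (by push_cast; ring)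
  have hslope (t : ℝ) (ht : t ∈ Set.Ico (0 : ℝ) 1) :
      ⟪gradient H (m + t • u), u⟫ ≤ L * ‖u‖ ^ 2 * t :=
    calc ⟪gradient H (m + t • u), u⟫ = ⟪gradient H (m + t • u) - gradient H m, u⟫ := by
          rw [hm, sub_zero]
      _ ≤ ‖gradient H (m + t • u) - gradient H m‖ * ‖u‖ := real_inner_le_norm _ _
      _ ≤ L * ‖t • u‖ * ‖u‖ := by
          gcongr
          simpa using hLip (m + t • u) m
      _ = L * ‖u‖ ^ 2 * t := by
          rw [norm_smul, Real.norm_of_nonneg ht.1]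
          ring
  have h := image_le_of_deriv_right_le_deriv_boundary
    (fun t _ => (hg t).continuousAt.continuousWithinAt) (fun t _ => (hg t).hasDerivWithinAt)
    (by simp) (fun t _ => (hB t).continuousAt.continuousWithinAt)
    (fun t _ => (hB t).hasDerivWithinAt) hslope (show (1 : ℝ) ∈ Set.Icc 0 1 by simp)
  simpa [u] using h

theorem norm_gradient_sub_le_of_norm_fderiv_gradient_le {H : E → ℝ} (hH : ContDiff ℝ 2 H)
    {L : ℝ} (hL : ∀ x, ‖fderiv ℝ (gradient H) x‖ ≤ L) (x y : E) :
    ‖gradient H x - gradient H y‖ ≤ L * ‖x - y‖ := by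
  have hdiff : Differentiable ℝ (gradient H) :=
    (toDual ℝ E).symm.differentiable.comp
      ((hH.fderiv_right (m := 1) (by norm_num)).differentiable one_ne_zero)
  exact Convex.norm_image_sub_le_of_norm_fderiv_le (fun z _ => hdiff z) (fun z _ => hL z)
    convex_univ trivial trivial

theorem gradient_log_inv_mul_rpow {ν : E → ℝ} (hν : ∀ x, 0 < ν x) {Z β : ℝ} (hZ : 0 < Z)
    {x : E} (hH : DifferentiableAt ℝ (fun z => -Real.log (ν z)) x) :
    gradient (fun y => Real.log (Z⁻¹ * ν y ^ β)) x =
      -(β • gradient (fun z => -Real.log (ν z)) x) := by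
  have hlog : (fun y => Real.log (Z⁻¹ * ν y ^ β)) =
      fun y => Real.log Z⁻¹ - β * -Real.log (ν y) := by
    funext y
    rw [Real.log_mul (by positivity) (Real.rpow_pos_of_pos (hν y) β).ne',
      Real.log_rpow (hν y)]
    ring
  rw [hlog]
  apply HasGradientAt.gradient
  rw [hasGradientAt_iff_hasFDerivAt]
  exact ((hH.hasGradientAt.hasFDerivAt.const_mul β).const_sub (Real.log Z⁻¹)).congr_fderiv
    (by rw [map_neg, map_smul])

theorem log_sub_log_le_of_mem_closedBall {ν : E → ℝ} (hH : ContDiff ℝ 2 fun z => -Real.log (ν z))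
    {m : E} (hmono : ∀ z, 0 ≤ ⟪gradient (fun z => -Real.log (ν z)) z, z - m⟫)
    (hm : gradient (fun z => -Real.log (ν z)) m = 0) {L : ℝ}
    (hL : ∀ x, ‖fderiv ℝ (gradient fun z => -Real.log (ν z)) x‖ ≤ L) {R : ℝ} (x : E) {y : E}
    (hy : y ∈ Metric.closedBall m R) : Real.log (ν x) - Real.log (ν y) ≤ L / 2 * R ^ 2 := by
  have hHd : Differentiable ℝ fun z => -Real.log (ν z) := hH.differentiable (by norm_num)
  have hlow : -Real.log (ν m) ≤ -Real.log (ν x) :=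
    le_of_forall_inner_gradient_sub_nonneg hHd hmono x
  have hupp : -Real.log (ν y) ≤ -Real.log (ν m) + L / 2 * ‖y - m‖ ^ 2 :=
    le_add_mul_norm_sub_sq_of_lipschitz_gradient hHd
      (norm_gradient_sub_le_of_norm_fderiv_gradient_le hH hL) hm y
  have hL0 : 0 ≤ L := (norm_nonneg _).trans (hL m)
  have hyR : ‖y - m‖ ≤ R := by rwa [← dist_eq_norm]
  have : L / 2 * ‖y - m‖ ^ 2 ≤ L / 2 * R ^ 2 := by gcongr
  linarith

end Calculus

theorem lap_mul_norm_sub_sq_add {d : ℕ} (a b : ℝ) (m x : Euc d) :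
    lap (fun x => a * ‖x - m‖ ^ 2 + b) x = 2 * a * d := by
  have hsecond (e : Euc d) :
      fderiv ℝ (fun y => fderiv ℝ (fun x => a * ‖x - m‖ ^ 2 + b) y e) x e = 2 * a * ‖e‖ ^ 2 := by
    have hfirst : (fun y => fderiv ℝ (fun x => a * ‖x - m‖ ^ 2 + b) y e) =
        fun y => 2 * a * innerSL ℝ e y - 2 * a * ⟪e, m⟫ := by
      funext y
      rw [(hasGradientAt_mul_norm_sub_sq_add a b m y).fderiv_apply, real_inner_smul_left,
        real_inner_comm, innerSL_apply_apply, inner_sub_right]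
      ring
    rw [hfirst, (((innerSL ℝ e).hasFDerivAt.const_mul (2 * a)).sub_const _).fderiv]
    simp
  simp only [lap, hsecond, PiLp.norm_single, norm_one, one_pow, mul_one,
    Finset.sum_const, Finset.card_univ, Fintype.card_fin, nsmul_eq_mul]
  ring

theorem rpow_le_exp_mul_rpow_of_log_sub_le {a b β K : ℝ} (ha : 0 < a) (hb : 0 < b) (hβ : 0 ≤ β)
    (h : Real.log a - Real.log b ≤ K) : a ^ β ≤ Real.exp (β * K) * b ^ β := by
  rw [Real.rpow_def_of_pos ha, Real.rpow_def_of_pos hb, ← Real.exp_add, Real.exp_le_exp]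
  nlinarith

theorem LGen_mul_norm_sub_sq_add_le {d : ℕ} (hd : 0 < d) {μ H : Euc d → ℝ} {m x : Euc d}
    {β c : ℝ} (hβ : 0 < β) (hc : 0 < c)
    (hgrad : gradient (fun y => Real.log (μ y)) x = -(β • gradient H x))
    (hsc : c * ‖x - m‖ ^ 2 ≤ ⟪gradient H x, x - m⟫) :
    LGen μ (fun x => (β * c / (2 * d)) * ‖x - m‖ ^ 2 + 1) x ≤
      -(β * c) * ((β * c / (2 * d)) * ‖x - m‖ ^ 2 + 1) +
        2 * (β * c) * (Metric.closedBall m (Real.sqrt (4 * d / (β * c)))).indicator 1 x := by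
  set lam := β * c
  set a := lam / (2 * d)
  have hd' : (0 : ℝ) < d := by exact_mod_cast hd
  have hlam : 0 < lam := by positivity
  have h2ad : 2 * a * d = lam := by simp only [a]; field_simp
  have hLGen : LGen μ (fun x => a * ‖x - m‖ ^ 2 + 1) x ≤ -(2 * a * lam) * ‖x - m‖ ^ 2 + lam := by
    rw [LGen, (hasGradientAt_mul_norm_sub_sq_add a 1 m x).gradient, hgrad,
      lap_mul_norm_sub_sq_add, h2ad, inner_neg_right, real_inner_smul_left,
      real_inner_smul_right, real_inner_comm]
    have hgap : 0 ≤ 2 * a * β * (⟪gradient H x, x - m⟫ - c * ‖x - m‖ ^ 2) := by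
      have := sub_nonneg.mpr hsc
      positivity
    nlinarith
  by_cases hx : x ∈ Metric.closedBall m (Real.sqrt (4 * d / lam))
  · rw [Set.indicator_of_mem hx, Pi.one_apply]
    nlinarith [show 0 ≤ a * lam * ‖x - m‖ ^ 2 by positivity]
  · rw [Set.indicator_of_notMem hx]
    have hfar : 4 * d / lam ≤ ‖x - m‖ ^ 2 := by
      rw [Metric.mem_closedBall, dist_eq_norm, not_le] at hx
      exact (Real.lt_sq_of_sqrt_lt hx).le
    have hV : 2 ≤ a * ‖x - m‖ ^ 2 := by
      rw [div_le_iff₀ hlam] at hfar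
      simp only [a]
      rw [div_mul_eq_mul_div, le_div_iff₀ (by positivity)]
      linarith
    nlinarith

theorem tempered_logconcave_lyapunov_general
    (d : ℕ) (hd : 1 ≤ d) (l 𝒞 : ℝ) (hl : 0 < l)
    (ν : Euc d → ℝ) (hνpos : ∀ x, 0 < ν x)
    (hlc : IsLogConcave ν (l ^ 2)⁻¹ ((l ^ 2)⁻¹ * 𝒞))
    (m : Euc d) (hm : gradient (fun z => -Real.log (ν z)) m = 0)
    (β : ℝ) (hβ : 0 < β)
    (μ : Euc d → ℝ) (Z : ℝ) (hZ : 0 < Z)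
    (hform : ∀ x, μ x = Z⁻¹ * ν x ^ β) :
    IsLyapunov μ (fun x => (β * (l ^ 2)⁻¹ / (2 * d)) * ‖x - m‖ ^ 2 + 1)
      (β * (l ^ 2)⁻¹) (2 * (β * (l ^ 2)⁻¹))
      (Metric.closedBall m (Real.sqrt (4 * d / (β * (l ^ 2)⁻¹))))
      (Real.exp (2 * d * 𝒞)) := by
  obtain ⟨hH, hmono, hhess⟩ := hlc
  have hc : 0 < (l ^ 2)⁻¹ := by positivity
  have hHd : Differentiable ℝ (fun z => -Real.log (ν z)) := hH.differentiable (by norm_num)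
  have hsc (x : Euc d) :
      (l ^ 2)⁻¹ * ‖x - m‖ ^ 2 ≤ ⟪gradient (fun z => -Real.log (ν z)) x, x - m⟫ := by
    simpa [hm] using hmono x m
  obtain rfl : μ = fun x => Z⁻¹ * ν x ^ β := funext hform
  refine ⟨contDiff_const.mul ((contDiff_norm_sq ℝ).comp (contDiff_id.sub contDiff_const))
    |>.add contDiff_const, fun x => le_add_of_nonneg_left (by positivity), by positivity,
    by positivity, Real.exp_pos _, Metric.isBounded_closedBall, fun x =>
    LGen_mul_norm_sub_sq_add_le hd hβ hc (gradient_log_inv_mul_rpow hνpos hZ (hHd x)) (hsc x),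
    fun x _ y hy => ?_⟩
  have hosc := log_sub_log_le_of_mem_closedBall hH
    (fun z => (mul_nonneg hc.le (sq_nonneg _)).trans (hsc z)) hm hhess x hy
  have hexp : β * ((l ^ 2)⁻¹ * 𝒞 / 2 * Real.sqrt (4 * d / (β * (l ^ 2)⁻¹)) ^ 2) = 2 * d * 𝒞 := by
    rw [Real.sq_sqrt (by positivity)]
    field_simp
    ring
  calc Z⁻¹ * ν x ^ β ≤ Z⁻¹ * (Real.exp (2 * d * 𝒞) * ν y ^ β) := by
        rw [← hexp]
        gcongr
        exact rpow_le_exp_mul_rpow_of_log_sub_le (hνpos x) (hνpos y) hβ.le hosc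
    _ = Real.exp (2 * d * 𝒞) * (Z⁻¹ * ν y ^ β) := by ring

/-- Lyapunov function for tempered log-concave densities (Lemma 3.2 of
the paper): if `ν` is `(l⁻², l⁻²𝒞)`-log-concave with mode `m` and `μ ∝ ν^β`, then
`V(x) = (λ_β/(2d))‖x−m‖² + 1` is a `(λ_β, 2λ_β, B(m,R_β), exp(2d𝒞))`-Lyapunov
function for `μ`, where `λ_β = β l⁻²` and `R_β = √(4d/λ_β)`. -/
theorem tempered_logconcave_lyapunov
    (d : ℕ) (hd : 1 ≤ d) (l 𝒞 : ℝ) (hl : 0 < l) (h𝒞 : 0 < 𝒞)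
    (ν : Euc d → ℝ) (hν : IsDensity ν) (hνpos : ∀ x, 0 < ν x)
    (hlc : IsLogConcave ν (l ^ 2)⁻¹ ((l ^ 2)⁻¹ * 𝒞))
    (m : Euc d) (hm : gradient (fun z => -Real.log (ν z)) m = 0)
    (β : ℝ) (hβ : 0 < β) (hβ1 : β ≤ 1)
    (μ : Euc d → ℝ) (hμ : IsDensity μ) (Z : ℝ) (hZ : 0 < Z)
    (hform : ∀ x, μ x = Z⁻¹ * ν x ^ β) :
    IsLyapunov μ (fun x => (β * (l ^ 2)⁻¹ / (2 * d)) * ‖x - m‖ ^ 2 + 1)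
      (β * (l ^ 2)⁻¹) (2 * (β * (l ^ 2)⁻¹))
      (Metric.closedBall m (Real.sqrt (4 * d / (β * (l ^ 2)⁻¹))))
      (Real.exp (2 * d * 𝒞)) :=
  tempered_logconcave_lyapunov_general d hd l 𝒞 hl ν hνpos hlc m hm β hβ μ Z hZ hform

end
end
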